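/- arXiv:2304.08045 — 2 statements merged into one kernel-verified Lean document; each statement's English description precedes it below -/
import Mathlib

section
/- Let (γ,f₁,f₂) be a pseudo-spherical spacelike framed immersion whose curvature has the form (α,ℓ̂,0,n̂), with ε̂ = ⟨f₁,f₁⟩, and assume α²(s)+ε̂n̂²(s) ≠ 0 and g(s) ≠ 0 for all s. If f₁ has a singular point at s₀ (i.e., f₁'(s₀) = 0, equivalently ℓ̂(s₀) = 0), then E(γ)(s₀) = ±f₁(s₀), and E(γ)'(s₀) = 0 if and only if n̂(s₀)ℓ̂'(s₀) = 0. If both ℓ̂(s₀) = 0 and n̂(s₀) = 0 (i.e., f₂ has a singular point at s₀), then E(γ)(s₀) = ±f₁(s₀) and E(γ)'(s₀) = 0. -/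
noncomputable section

/-- The index-2 pseudo-scalar product on `ℝ⁴₂`. -/
def pdot (u w : Fin 4 → ℝ) : ℝ :=
  -(u 0 * w 0) - u 1 * w 1 + u 2 * w 2 + u 3 * w 3

/-- 3×3 determinant. -/
def det3 (a b c d e f g h i : ℝ) : ℝ :=
  a * (e * i - f * h) - b * (d * i - f * g) + c * (d * h - e * g)

/-- The triple product `u×v×w` in `ℝ⁴₂`. -/
def tripleProd (u v w : Fin 4 → ℝ) : Fin 4 → ℝ :=
  ![ -det3 (u 1) (u 2) (u 3) (v 1) (v 2) (v 3) (w 1) (w 2) (w 3),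
      det3 (u 0) (u 2) (u 3) (v 0) (v 2) (v 3) (w 0) (w 2) (w 3),
      det3 (u 0) (u 1) (u 3) (v 0) (v 1) (v 3) (w 0) (w 1) (w 3),
     -det3 (u 0) (u 1) (u 2) (v 0) (v 1) (v 2) (w 0) (w 1) (w 2)]

/-- `μ(s) = γ(s)×v₁(s)×v₂(s)`. -/
def muOf (γ v₁ v₂ : ℝ → Fin 4 → ℝ) (s : ℝ) : Fin 4 → ℝ :=
  tripleProd (γ s) (v₁ s) (v₂ s)

/-- Pseudo-spherical spacelike framed curve on the open interval `I`. -/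
structure SpacelikeFramed (I : Set ℝ) (γ v₁ v₂ : ℝ → Fin 4 → ℝ) (ε : ℝ) : Prop where
  smooth_γ : ContDiffOn ℝ (⊤ : ℕ∞) γ I
  smooth_v₁ : ContDiffOn ℝ (⊤ : ℕ∞) v₁ I
  smooth_v₂ : ContDiffOn ℝ (⊤ : ℕ∞) v₂ I
  eps : ε = 1 ∨ ε = -1
  ads : ∀ s ∈ I, pdot (γ s) (γ s) = -1
  normv₁ : ∀ s ∈ I, pdot (v₁ s) (v₁ s) = ε
  normv₂ : ∀ s ∈ I, pdot (v₂ s) (v₂ s) = -ε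
  orth₁ : ∀ s ∈ I, pdot (γ s) (v₁ s) = 0
  orth₂ : ∀ s ∈ I, pdot (γ s) (v₂ s) = 0
  orth₃ : ∀ s ∈ I, pdot (v₁ s) (v₂ s) = 0
  tangent₁ : ∀ s ∈ I, pdot (deriv γ s) (v₁ s) = 0
  tangent₂ : ∀ s ∈ I, pdot (deriv γ s) (v₂ s) = 0

def scurvA (γ v₁ v₂ : ℝ → Fin 4 → ℝ) (s : ℝ) : ℝ := pdot (deriv γ s) (muOf γ v₁ v₂ s)
def scurvL (ε : ℝ) (v₁ v₂ : ℝ → Fin 4 → ℝ) (s : ℝ) : ℝ := -ε * pdot (deriv v₁ s) (v₂ s)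
def scurvM (γ v₁ v₂ : ℝ → Fin 4 → ℝ) (s : ℝ) : ℝ := pdot (deriv v₁ s) (muOf γ v₁ v₂ s)
def scurvN (γ v₁ v₂ : ℝ → Fin 4 → ℝ) (s : ℝ) : ℝ := pdot (deriv v₂ s) (muOf γ v₁ v₂ s)

/-- Pseudo-spherical timelike framed curve on the open interval `I`. -/
structure TimelikeFramed (I : Set ℝ) (γ v₁ v₂ : ℝ → Fin 4 → ℝ) : Prop where
  smooth_γ : ContDiffOn ℝ (⊤ : ℕ∞) γ I
  smooth_v₁ : ContDiffOn ℝ (⊤ : ℕ∞) v₁ I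
  smooth_v₂ : ContDiffOn ℝ (⊤ : ℕ∞) v₂ I
  ads : ∀ s ∈ I, pdot (γ s) (γ s) = -1
  normv₁ : ∀ s ∈ I, pdot (v₁ s) (v₁ s) = 1
  normv₂ : ∀ s ∈ I, pdot (v₂ s) (v₂ s) = 1
  orth₁ : ∀ s ∈ I, pdot (γ s) (v₁ s) = 0
  orth₂ : ∀ s ∈ I, pdot (γ s) (v₂ s) = 0
  orth₃ : ∀ s ∈ I, pdot (v₁ s) (v₂ s) = 0
  tangent₁ : ∀ s ∈ I, pdot (deriv γ s) (v₁ s) = 0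
  tangent₂ : ∀ s ∈ I, pdot (deriv γ s) (v₂ s) = 0

def tcurvA (γ v₁ v₂ : ℝ → Fin 4 → ℝ) (s : ℝ) : ℝ := -pdot (deriv γ s) (muOf γ v₁ v₂ s)
def tcurvL (v₁ v₂ : ℝ → Fin 4 → ℝ) (s : ℝ) : ℝ := pdot (deriv v₁ s) (v₂ s)
def tcurvM (γ v₁ v₂ : ℝ → Fin 4 → ℝ) (s : ℝ) : ℝ := -pdot (deriv v₁ s) (muOf γ v₁ v₂ s)
def tcurvN (γ v₁ v₂ : ℝ → Fin 4 → ℝ) (s : ℝ) : ℝ := -pdot (deriv v₂ s) (muOf γ v₁ v₂ s)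

/-- `g(s)` for the spacelike total evolute. -/
def sG (α ℓh nh : ℝ → ℝ) (εh : ℝ) (s : ℝ) : ℝ :=
  εh * (α s * deriv nh s - nh s * deriv α s) ^ 2
    - (ℓh s) ^ 2 * (nh s) ^ 2 * ((nh s) ^ 2 + εh * (α s) ^ 2)

/-- Total evolute (with the `+` sign) of a spacelike framed immersion with curvature
`(α, ℓ̂, 0, n̂)`. -/
def sEvolute (γ f₁ f₂ : ℝ → Fin 4 → ℝ) (α ℓh nh : ℝ → ℝ) (εh : ℝ) (s : ℝ) : Fin 4 → ℝ :=
  (Real.sqrt |sG α ℓh nh εh s|)⁻¹ •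
    ((ℓh s * nh s) • (nh s • γ s - α s • f₂ s)
      - (α s * deriv nh s - nh s * deriv α s) • f₁ s)

/-- `f(s)` for the timelike total evolute. -/
def tF (α ℓh nh : ℝ → ℝ) (s : ℝ) : ℝ :=
  (α s * deriv nh s - nh s * deriv α s) ^ 2
    - (ℓh s) ^ 2 * (nh s) ^ 2 * ((nh s) ^ 2 - (α s) ^ 2)

/-- Total evolute (with the `+` sign) of a timelike framed immersion with curvature
`(α, ℓ̂, 0, n̂)`. -/
def tEvolute (γ f₁ f₂ : ℝ → Fin 4 → ℝ) (α ℓh nh : ℝ → ℝ) (s : ℝ) : Fin 4 → ℝ :=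
  (Real.sqrt |tF α ℓh nh s|)⁻¹ •
    ((ℓh s * nh s) • (nh s • γ s - α s • f₂ s)
      - (α s * deriv nh s - nh s * deriv α s) • f₁ s)


open scoped ContDiff

section EvoluteHelpers

private lemma pdot_comm' (u v : Fin 4 → ℝ) : pdot u v = pdot v u := by simp [pdot]; ring

private lemma pdot_tp_left' (u v w : Fin 4 → ℝ) : pdot (tripleProd u v w) u = 0 := by
  simp [pdot, tripleProd, det3]; ring

private lemma pdot_tp_mid' (u v w : Fin 4 → ℝ) : pdot (tripleProd u v w) v = 0 := by
  simp [pdot, tripleProd, det3]; ring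

private lemma pdot_tp_right' (u v w : Fin 4 → ℝ) : pdot (tripleProd u v w) w = 0 := by
  simp [pdot, tripleProd, det3]; ring

private lemma pdot_tp_self' (u v w : Fin 4 → ℝ) :
    pdot (tripleProd u v w) (tripleProd u v w) =
      pdot u u * (pdot v v * pdot w w - pdot v w ^ 2)
      - pdot u v * (pdot u v * pdot w w - pdot v w * pdot u w)
      + pdot u w * (pdot u v * pdot v w - pdot v v * pdot u w) := by
  simp [pdot, tripleProd, det3]; ring

private lemma cramer' (a b c m x : Fin 4 → ℝ) (i : Fin 4) :
    pdot (tripleProd b c m) a * x i =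
      pdot x a * tripleProd b c m i - pdot x b * tripleProd a c m i
      + pdot x c * tripleProd a b m i - pdot x m * tripleProd a b c i := by
  fin_cases i <;> · simp [pdot, tripleProd, det3]; ring

private lemma delta_eq' (a b c : Fin 4 → ℝ) :
    pdot (tripleProd b c (tripleProd a b c)) a
      = -pdot (tripleProd a b c) (tripleProd a b c) := by
  simp [pdot, tripleProd, det3]; ring

private lemma pdot_sub_combo (u w a b c m : Fin 4 → ℝ) (c₁ c₂ c₃ c₄ : ℝ) :
    pdot (w - (c₁ • a + c₂ • b + c₃ • c + c₄ • m)) u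
      = pdot w u - c₁ * pdot a u - c₂ * pdot b u - c₃ * pdot c u - c₄ * pdot m u := by
  simp [pdot]; ring

private lemma pdot_smul_sub' (x y : ℝ) (u v w : Fin 4 → ℝ) :
    pdot (x • u - y • v) w = x * pdot u w - y * pdot v w := by
  simp [pdot]; ring

/-- Expansion of any vector in the pseudo-orthonormal frame `(a,b,c,m)`. -/
private lemma frame_expansion (a b c : Fin 4 → ℝ) (ε : ℝ) (hε : ε = 1 ∨ ε = -1)
    (haa : pdot a a = -1) (hbb : pdot b b = ε) (hcc : pdot c c = -ε)
    (hab : pdot a b = 0) (hac : pdot a c = 0) (hbc : pdot b c = 0)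
    (w : Fin 4 → ℝ) :
    w = (-(pdot w a)) • a + (ε * pdot w b) • b + (-(ε * pdot w c)) • c
        + (pdot w (tripleProd a b c)) • tripleProd a b c := by
  have hε2 : ε * ε = 1 := by rcases hε with h | h <;> rw [h] <;> norm_num
  set m := tripleProd a b c with hm
  have hmm : pdot m m = 1 := by
    rw [hm, pdot_tp_self', haa, hbb, hcc, hab, hac, hbc]; nlinarith
  have hma : pdot m a = 0 := pdot_tp_left' a b c
  have hmb : pdot m b = 0 := pdot_tp_mid' a b c
  have hmc : pdot m c = 0 := pdot_tp_right' a b c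
  set r := w - ((-(pdot w a)) • a + (ε * pdot w b) • b + (-(ε * pdot w c)) • c + (pdot w m) • m)
    with hr
  have hba : pdot b a = 0 := (pdot_comm' b a).trans hab
  have hca : pdot c a = 0 := (pdot_comm' c a).trans hac
  have hcb : pdot c b = 0 := (pdot_comm' c b).trans hbc
  have hra : pdot r a = 0 := by rw [hr, pdot_sub_combo, haa, hba, hca, hma]; ring
  have hrb : pdot r b = 0 := by
    rw [hr, pdot_sub_combo, hbb, hab, hcb, hmb]; linear_combination (-(pdot w b)) * hε2
  have hrc : pdot r c = 0 := by
    rw [hr, pdot_sub_combo, hcc, hac, hbc, hmc]; linear_combination (-(pdot w c)) * hε2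
  have hrm : pdot r m = 0 := by
    rw [hr, pdot_sub_combo, hmm, (pdot_comm' a m).trans hma, (pdot_comm' b m).trans hmb,
      (pdot_comm' c m).trans hmc]; ring
  have hdelta : pdot (tripleProd b c m) a = -1 := by rw [hm, delta_eq', ← hm, hmm]
  have hr0 : r = 0 := by
    funext i
    have h := cramer' a b c m r i
    rw [hra, hrb, hrc, hrm, hdelta] at h
    simpa using h.symm
  have hfin : w - ((-(pdot w a)) • a + (ε * pdot w b) • b + (-(ε * pdot w c)) • c
      + (pdot w m) • m) = 0 := hr0
  exact sub_eq_zero.mp hfin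

private lemma hasDerivAt_comp_apply {u : ℝ → Fin 4 → ℝ} {u' : Fin 4 → ℝ} {s : ℝ}
    (hu : HasDerivAt u u' s) (i : Fin 4) :
    HasDerivAt (fun t => u t i) (u' i) s := by
  exact hasDerivAt_pi.mp hu i

private lemma HasDerivAt.pdot2 {u v : ℝ → Fin 4 → ℝ} {u' v' : Fin 4 → ℝ} {s : ℝ}
    (hu : HasDerivAt u u' s) (hv : HasDerivAt v v' s) :
    HasDerivAt (fun t => pdot (u t) (v t)) (pdot u' (v s) + pdot (u s) v') s := by
  have h0 := (hasDerivAt_comp_apply hu 0).mul (hasDerivAt_comp_apply hv 0)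
  have h1 := (hasDerivAt_comp_apply hu 1).mul (hasDerivAt_comp_apply hv 1)
  have h2 := (hasDerivAt_comp_apply hu 2).mul (hasDerivAt_comp_apply hv 2)
  have h3 := (hasDerivAt_comp_apply hu 3).mul (hasDerivAt_comp_apply hv 3)
  have H := ((h0.neg.sub h1).add h2).add h3
  refine H.congr_deriv ?_
  simp [pdot]; ring

private lemma contDiffOn_apply' {u : ℝ → Fin 4 → ℝ} {I : Set ℝ} {n : WithTop ℕ∞}
    (hu : ContDiffOn ℝ n u I) (i : Fin 4) :
    ContDiffOn ℝ n (fun t => u t i) I :=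
  (ContinuousLinearMap.proj (R := ℝ) (φ := fun _ : Fin 4 => ℝ) i).contDiff.comp_contDiffOn hu

private lemma contDiffOn_scurvA {γ v₁ v₂ : ℝ → Fin 4 → ℝ} {I : Set ℝ} (hI : IsOpen I)
    (hγ : ContDiffOn ℝ ∞ γ I) (h1 : ContDiffOn ℝ ∞ v₁ I) (h2 : ContDiffOn ℝ ∞ v₂ I) :
    ContDiffOn ℝ ∞ (scurvA γ v₁ v₂) I := by
  have hd : ContDiffOn ℝ ∞ (deriv γ) I := hγ.deriv_of_isOpen hI (by norm_num)
  have hg0 := contDiffOn_apply' hγ 0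
  have hg1 := contDiffOn_apply' hγ 1
  have hg2 := contDiffOn_apply' hγ 2
  have hg3 := contDiffOn_apply' hγ 3
  have hv10 := contDiffOn_apply' h1 0
  have hv11 := contDiffOn_apply' h1 1
  have hv12 := contDiffOn_apply' h1 2
  have hv13 := contDiffOn_apply' h1 3
  have hv20 := contDiffOn_apply' h2 0
  have hv21 := contDiffOn_apply' h2 1
  have hv22 := contDiffOn_apply' h2 2
  have hv23 := contDiffOn_apply' h2 3
  have hd0 := contDiffOn_apply' hd 0
  have hd1 := contDiffOn_apply' hd 1
  have hd2 := contDiffOn_apply' hd 2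
  have hd3 := contDiffOn_apply' hd 3
  unfold scurvA pdot muOf tripleProd det3
  simp only [Matrix.cons_val_zero, Matrix.cons_val_one, Matrix.head_cons, Matrix.cons_val_two,
    Matrix.tail_cons, Matrix.cons_val_three, Fin.isValue]
  fun_prop

private lemma contDiffOn_scurvN {γ v₁ v₂ : ℝ → Fin 4 → ℝ} {I : Set ℝ} (hI : IsOpen I)
    (hγ : ContDiffOn ℝ ∞ γ I) (h1 : ContDiffOn ℝ ∞ v₁ I) (h2 : ContDiffOn ℝ ∞ v₂ I) :
    ContDiffOn ℝ ∞ (scurvN γ v₁ v₂) I := by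
  have hd : ContDiffOn ℝ ∞ (deriv v₂) I := h2.deriv_of_isOpen hI (by norm_num)
  have hg0 := contDiffOn_apply' hγ 0
  have hg1 := contDiffOn_apply' hγ 1
  have hg2 := contDiffOn_apply' hγ 2
  have hg3 := contDiffOn_apply' hγ 3
  have hv10 := contDiffOn_apply' h1 0
  have hv11 := contDiffOn_apply' h1 1
  have hv12 := contDiffOn_apply' h1 2
  have hv13 := contDiffOn_apply' h1 3
  have hv20 := contDiffOn_apply' h2 0
  have hv21 := contDiffOn_apply' h2 1
  have hv22 := contDiffOn_apply' h2 2
  have hv23 := contDiffOn_apply' h2 3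
  have hd0 := contDiffOn_apply' hd 0
  have hd1 := contDiffOn_apply' hd 1
  have hd2 := contDiffOn_apply' hd 2
  have hd3 := contDiffOn_apply' hd 3
  unfold scurvN pdot muOf tripleProd det3
  simp only [Matrix.cons_val_zero, Matrix.cons_val_one, Matrix.head_cons, Matrix.cons_val_two,
    Matrix.tail_cons, Matrix.cons_val_three, Fin.isValue]
  fun_prop

private lemma contDiffOn_scurvL {v₁ v₂ : ℝ → Fin 4 → ℝ} {I : Set ℝ} (ε : ℝ) (hI : IsOpen I)
    (h1 : ContDiffOn ℝ ∞ v₁ I) (h2 : ContDiffOn ℝ ∞ v₂ I) :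
    ContDiffOn ℝ ∞ (scurvL ε v₁ v₂) I := by
  have hd : ContDiffOn ℝ ∞ (deriv v₁) I := h1.deriv_of_isOpen hI (by norm_num)
  have hv20 := contDiffOn_apply' h2 0
  have hv21 := contDiffOn_apply' h2 1
  have hv22 := contDiffOn_apply' h2 2
  have hv23 := contDiffOn_apply' h2 3
  have hd0 := contDiffOn_apply' hd 0
  have hd1 := contDiffOn_apply' hd 1
  have hd2 := contDiffOn_apply' hd 2
  have hd3 := contDiffOn_apply' hd 3
  unfold scurvL pdot
  fun_prop

/-- First and second derivative facts for a function agreeing with a smooth one on an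
open set. -/
private lemma c2_facts {f g : ℝ → ℝ} {I : Set ℝ} (hI : IsOpen I)
    (hg : ContDiffOn ℝ ∞ g I) (hfg : ∀ s ∈ I, f s = g s) {s₀ : ℝ} (hs₀ : s₀ ∈ I) :
    HasDerivAt f (deriv f s₀) s₀ ∧ HasDerivAt (deriv f) (deriv (deriv f) s₀) s₀ := by
  have hmem : I ∈ nhds s₀ := hI.mem_nhds hs₀
  have hev : f =ᶠ[nhds s₀] g := Filter.eventuallyEq_of_mem hmem hfg
  have hg1 : HasDerivAt g (deriv g s₀) s₀ :=
    ((hg.contDiffAt hmem).differentiableAt (by simp)).hasDerivAt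
  have h1 : HasDerivAt f (deriv f s₀) s₀ := by
    rw [hev.deriv_eq]; exact hg1.congr_of_eventuallyEq hev
  have hdg : ContDiffOn ℝ ∞ (deriv g) I := hg.deriv_of_isOpen hI (by norm_num)
  have hdev : deriv f =ᶠ[nhds s₀] deriv g :=
    Filter.eventuallyEq_of_mem hmem fun s hs =>
      (Filter.eventuallyEq_of_mem (hI.mem_nhds hs) hfg).deriv_eq
  have hg2 : HasDerivAt (deriv g) (deriv (deriv g) s₀) s₀ :=
    ((hdg.contDiffAt hmem).differentiableAt (by simp)).hasDerivAt
  have h2 : HasDerivAt (deriv f) (deriv (deriv f) s₀) s₀ := by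
    rw [hdev.deriv_eq]; exact hg2.congr_of_eventuallyEq hdev
  exact ⟨h1, h2⟩

private lemma deriv_pdot_zero {u v : ℝ → Fin 4 → ℝ} {I : Set ℝ} (hI : IsOpen I)
    {s₀ : ℝ} (hs₀ : s₀ ∈ I) {u' v' : Fin 4 → ℝ}
    (hu : HasDerivAt u u' s₀) (hv : HasDerivAt v v' s₀)
    {c : ℝ} (hconst : ∀ s ∈ I, pdot (u s) (v s) = c) :
    pdot u' (v s₀) + pdot (u s₀) v' = 0 := by
  have h1 := hu.pdot2 hv
  have h2 : HasDerivAt (fun t => pdot (u t) (v t)) 0 s₀ :=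
    (hasDerivAt_const s₀ c).congr_of_eventuallyEq
      (Filter.eventuallyEq_of_mem (hI.mem_nhds hs₀) hconst)
  exact h1.unique h2

end EvoluteHelpers

theorem spacelike_evolute_at_singular_point_of_frame
    (I : Set ℝ) (hI : IsOpen I) (hIc : I.OrdConnected)
    (γ f₁ f₂ : ℝ → Fin 4 → ℝ) (εh : ℝ)
    (hfr : SpacelikeFramed I γ f₁ f₂ εh)
    (α ℓh nh : ℝ → ℝ)
    (hA : ∀ s ∈ I, α s = scurvA γ f₁ f₂ s)
    (hL : ∀ s ∈ I, ℓh s = scurvL εh f₁ f₂ s)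
    (hM0 : ∀ s ∈ I, scurvM γ f₁ f₂ s = 0)
    (hN : ∀ s ∈ I, nh s = scurvN γ f₁ f₂ s)
    (himm : ∀ s ∈ I, ¬(α s = 0 ∧ ℓh s = 0 ∧ nh s = 0))
    (hnd : ∀ s ∈ I, (α s) ^ 2 + εh * (nh s) ^ 2 ≠ 0)
    (hg : ∀ s ∈ I, sG α ℓh nh εh s ≠ 0)
    (s₀ : ℝ) (hs₀ : s₀ ∈ I) (hℓ0 : ℓh s₀ = 0) :
    (deriv f₁ s₀ = 0 ↔ ℓh s₀ = 0) ∧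
    (∃ c : ℝ, (c = 1 ∨ c = -1) ∧ sEvolute γ f₁ f₂ α ℓh nh εh s₀ = c • f₁ s₀) ∧
    (deriv (sEvolute γ f₁ f₂ α ℓh nh εh) s₀ = 0 ↔ nh s₀ * deriv ℓh s₀ = 0) ∧
    (nh s₀ = 0 → deriv (sEvolute γ f₁ f₂ α ℓh nh εh) s₀ = 0) := by
  have hmem : I ∈ nhds s₀ := hI.mem_nhds hs₀
  have hγS : ContDiffOn ℝ ∞ γ I := hfr.smooth_γ.of_le (by simp)
  have hf₁S : ContDiffOn ℝ ∞ f₁ I := hfr.smooth_v₁.of_le (by simp)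
  have hf₂S : ContDiffOn ℝ ∞ f₂ I := hfr.smooth_v₂.of_le (by simp)
  have hγd : HasDerivAt γ (deriv γ s₀) s₀ :=
    ((hγS.contDiffAt hmem).differentiableAt (by simp)).hasDerivAt
  have hf₁d : HasDerivAt f₁ (deriv f₁ s₀) s₀ :=
    ((hf₁S.contDiffAt hmem).differentiableAt (by simp)).hasDerivAt
  have hf₂d : HasDerivAt f₂ (deriv f₂ s₀) s₀ :=
    ((hf₂S.contDiffAt hmem).differentiableAt (by simp)).hasDerivAt
  obtain ⟨hαd, hαdd⟩ := c2_facts hI (contDiffOn_scurvA hI hγS hf₁S hf₂S) hA hs₀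
  obtain ⟨hnd1, hndd⟩ := c2_facts hI (contDiffOn_scurvN hI hγS hf₁S hf₂S) hN hs₀
  obtain ⟨hld, -⟩ := c2_facts hI (contDiffOn_scurvL εh hI hf₁S hf₂S) hL hs₀
  have hε2 : εh * εh = 1 := by rcases hfr.eps with h | h <;> rw [h] <;> norm_num
  have hεne : εh ≠ 0 := by rcases hfr.eps with h | h <;> rw [h] <;> norm_num
  -- `deriv f₁ s₀ = 0`
  have hpa : pdot (deriv f₁ s₀) (γ s₀) = 0 := by
    have t1 := deriv_pdot_zero hI hs₀ hf₁d hγd (c := 0)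
      (fun s hs => (pdot_comm' (f₁ s) (γ s)).trans (hfr.orth₁ s hs))
    have t2 : pdot (f₁ s₀) (deriv γ s₀) = 0 :=
      (pdot_comm' (f₁ s₀) (deriv γ s₀)).trans (hfr.tangent₁ s₀ hs₀)
    linarith
  have hpb : pdot (deriv f₁ s₀) (f₁ s₀) = 0 := by
    have t1 := deriv_pdot_zero hI hs₀ hf₁d hf₁d (c := εh) hfr.normv₁
    have t2 := pdot_comm' (f₁ s₀) (deriv f₁ s₀)
    linarith
  have hpc : pdot (deriv f₁ s₀) (f₂ s₀) = 0 := by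
    have h : (0 : ℝ) = -εh * pdot (deriv f₁ s₀) (f₂ s₀) := hℓ0 ▸ hL s₀ hs₀
    have := mul_eq_zero.mp h.symm
    rcases this with h' | h'
    · exact absurd (neg_eq_zero.mp h') hεne
    · exact h'
  have hpm : pdot (deriv f₁ s₀) (tripleProd (γ s₀) (f₁ s₀) (f₂ s₀)) = 0 := hM0 s₀ hs₀
  have hf₁'0 : deriv f₁ s₀ = 0 := by
    have hexp := frame_expansion (γ s₀) (f₁ s₀) (f₂ s₀) εh hfr.eps (hfr.ads s₀ hs₀)
      (hfr.normv₁ s₀ hs₀) (hfr.normv₂ s₀ hs₀) (hfr.orth₁ s₀ hs₀) (hfr.orth₂ s₀ hs₀)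
      (hfr.orth₃ s₀ hs₀) (deriv f₁ s₀)
    rw [hpa, hpb, hpc, hpm] at hexp
    simpa using hexp
  -- basic facts about `D₀` and `g`
  have hg₀ : sG α ℓh nh εh s₀
      = εh * (α s₀ * deriv nh s₀ - nh s₀ * deriv α s₀) ^ 2 := by
    unfold sG; rw [hℓ0]; ring
  have hD₀ne : α s₀ * deriv nh s₀ - nh s₀ * deriv α s₀ ≠ 0 := by
    intro h; exact hg s₀ hs₀ (by rw [hg₀, h]; ring)
  have habs : |sG α ℓh nh εh s₀| = (α s₀ * deriv nh s₀ - nh s₀ * deriv α s₀) ^ 2 := by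
    rw [hg₀, abs_mul]
    rcases hfr.eps with h | h <;>
      simp [h, abs_of_nonneg (sq_nonneg (α s₀ * deriv nh s₀ - nh s₀ * deriv α s₀))]
  have hsqrt : Real.sqrt |sG α ℓh nh εh s₀|
      = |α s₀ * deriv nh s₀ - nh s₀ * deriv α s₀| := by
    rw [habs, Real.sqrt_sq_eq_abs]
  have habsne : |α s₀ * deriv nh s₀ - nh s₀ * deriv α s₀| ≠ 0 := abs_ne_zero.mpr hD₀ne
  -- value of the evolute at `s₀`
  have hEval : sEvolute γ f₁ f₂ α ℓh nh εh s₀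
      = (-((α s₀ * deriv nh s₀ - nh s₀ * deriv α s₀)
          * |α s₀ * deriv nh s₀ - nh s₀ * deriv α s₀|⁻¹)) • f₁ s₀ := by
    unfold sEvolute
    rw [hsqrt, hℓ0]
    match_scalars <;> ring
  -- the derivative of the evolute at `s₀`
  have hDd : HasDerivAt (fun s => α s * deriv nh s - nh s * deriv α s)
      (deriv α s₀ * deriv nh s₀ + α s₀ * deriv (deriv nh) s₀
        - (deriv nh s₀ * deriv α s₀ + nh s₀ * deriv (deriv α) s₀)) s₀ :=
    (hαd.mul hndd).sub (hnd1.mul hαdd)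
  have hgd : HasDerivAt (fun s => sG α ℓh nh εh s) _ s₀ :=
    ((hDd.pow 2).const_mul εh).sub
      (((hld.pow 2).mul (hnd1.pow 2)).mul ((hnd1.pow 2).add ((hαd.pow 2).const_mul εh)))
  have hposg : 0 < εh * sG α ℓh nh εh s₀ := by
    rw [hg₀, ← mul_assoc, hε2, one_mul]
    have := mul_self_pos.mpr hD₀ne
    nlinarith
  have hsq2 : Real.sqrt (εh * sG α ℓh nh εh s₀)
      = |α s₀ * deriv nh s₀ - nh s₀ * deriv α s₀| := by
    rw [hg₀, ← mul_assoc, hε2, one_mul, Real.sqrt_sq_eq_abs]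
  have hevabs : (fun s => Real.sqrt |sG α ℓh nh εh s|)
      =ᶠ[nhds s₀] (fun s => Real.sqrt (εh * sG α ℓh nh εh s)) := by
    have hc : ContinuousAt (fun s => εh * sG α ℓh nh εh s) s₀ :=
      (hgd.const_mul εh).continuousAt
    have hpos := hc.eventually (eventually_gt_nhds hposg)
    filter_upwards [hpos] with s hs
    have habs' : |sG α ℓh nh εh s| = εh * sG α ℓh nh εh s := by
      rcases hfr.eps with h | h
      · rw [h, one_mul] at hs ⊢; exact abs_of_pos hs
      · rw [h] at hs ⊢; rw [abs_of_neg (by linarith), neg_one_mul]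
    rw [habs']
  have hφ : HasDerivAt (fun s => Real.sqrt |sG α ℓh nh εh s|) _ s₀ :=
    ((hgd.const_mul εh).sqrt (ne_of_gt hposg)).congr_of_eventuallyEq hevabs
  have hφne : Real.sqrt |sG α ℓh nh εh s₀| ≠ 0 := by rw [hsqrt]; exact habsne
  have hV : HasDerivAt (fun s => (ℓh s * nh s) • (nh s • γ s - α s • f₂ s)
      - (α s * deriv nh s - nh s * deriv α s) • f₁ s) _ s₀ :=
    ((hld.mul hnd1).smul ((hnd1.smul hγd).sub (hαd.smul hf₂d))).sub (hDd.smul hf₁d)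
  have hE : HasDerivAt (sEvolute γ f₁ f₂ α ℓh nh εh) _ s₀ := (hφ.inv hφne).smul hV
  have hdE : deriv (sEvolute γ f₁ f₂ α ℓh nh εh) s₀
      = (deriv ℓh s₀ * nh s₀ * |α s₀ * deriv nh s₀ - nh s₀ * deriv α s₀|⁻¹)
        • (nh s₀ • γ s₀ - α s₀ • f₂ s₀) := by
    rw [hE.deriv]
    simp only [Pi.inv_apply, Pi.mul_apply, Pi.pow_apply, Pi.sub_apply, Pi.smul_apply']
    rw [hℓ0, hf₁'0, hsqrt, hsq2]
    match_scalars
    · ring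
    · ring
    · ring
    · ring
    · rw [show (2:ℕ) - 1 = 1 from rfl, pow_one]
      field_simp
      linear_combination ((α s₀ * deriv nh s₀ - nh s₀ * deriv α s₀) ^ 2
        * (deriv α s₀ * deriv nh s₀ + α s₀ * deriv (deriv nh) s₀
            - (deriv nh s₀ * deriv α s₀ + nh s₀ * deriv (deriv α) s₀))) * hε2
        - (deriv α s₀ * deriv nh s₀ + α s₀ * deriv (deriv nh) s₀
            - (deriv nh s₀ * deriv α s₀ + nh s₀ * deriv (deriv α) s₀))
          * sq_abs (α s₀ * deriv nh s₀ - nh s₀ * deriv α s₀)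
  refine ⟨⟨fun _ => hℓ0, fun _ => hf₁'0⟩,
    ⟨-((α s₀ * deriv nh s₀ - nh s₀ * deriv α s₀)
        * |α s₀ * deriv nh s₀ - nh s₀ * deriv α s₀|⁻¹), ?_, hEval⟩, ?_, ?_⟩
  · rcases lt_or_gt_of_ne hD₀ne with h | h
    · left; rw [abs_of_neg h, inv_neg, mul_neg, neg_neg,
        mul_inv_cancel₀ hD₀ne]
    · right; rw [abs_of_pos h, mul_inv_cancel₀ hD₀ne]
  · rw [hdE]
    constructor
    · intro h0
      by_contra hne
      have hN0 : nh s₀ ≠ 0 := fun h => hne (by rw [h]; ring)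
      have hL'0 : deriv ℓh s₀ ≠ 0 := fun h => hne (by rw [h]; ring)
      have hWne : (nh s₀ • γ s₀ - α s₀ • f₂ s₀) ≠ 0 := by
        intro hW
        have hp : pdot (nh s₀ • γ s₀ - α s₀ • f₂ s₀) (γ s₀) = -nh s₀ := by
          rw [pdot_smul_sub', hfr.ads s₀ hs₀,
            (pdot_comm' (f₂ s₀) (γ s₀)).trans (hfr.orth₂ s₀ hs₀)]
          ring
        rw [hW] at hp
        simp [pdot] at hp
        exact hN0 hp
      have hKne : deriv ℓh s₀ * nh s₀
          * |α s₀ * deriv nh s₀ - nh s₀ * deriv α s₀|⁻¹ ≠ 0 :=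
        mul_ne_zero (mul_ne_zero hL'0 hN0) (inv_ne_zero habsne)
      exact hKne ((smul_eq_zero.mp h0).resolve_right hWne)
    · intro h0
      rw [show deriv ℓh s₀ * nh s₀ * |α s₀ * deriv nh s₀ - nh s₀ * deriv α s₀|⁻¹
          = (nh s₀ * deriv ℓh s₀) * |α s₀ * deriv nh s₀ - nh s₀ * deriv α s₀|⁻¹ from by ring,
        h0, zero_mul, zero_smul]
  · intro hN0
    rw [hdE, hN0]
    simp
end
end

section
/- Let (γ,f₁,f₂) be a pseudo-spherical timelike framed immersion on I whose curvature has the form (α,ℓ̂,0,n̂), satisfying α²(s) ≠ n̂²(s) and f(s) ≠ 0 for all s, and let u : Ĩ → I be a change of parameter. Then (γ∘u, f₁∘u, f₂∘u) is a pseudo-spherical timelike framed immersion whose curvature also has vanishing third component and satisfies the corresponding nondegeneracy conditions, and its total evolute (with the + sign choice) satisfies E(γ∘u)(s) = E(γ)(u(s)) for all s ∈ Ĩ; i.e., the total evolute is independent of the parametrization. -/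
noncomputable section

-- Auxiliary lemmas -------------------------------------------------------

lemma pdot_smul_left (c : ℝ) (x y : Fin 4 → ℝ) : pdot (c • x) y = c * pdot x y := by
  simp [pdot]; ring

lemma diffAt_of_contDiffOn {E : Type*} [NormedAddCommGroup E] [NormedSpace ℝ E]
    {I : Set ℝ} (hI : IsOpen I) {F : ℝ → E} (hF : ContDiffOn ℝ (⊤ : ℕ∞) F I) {x : ℝ} (hx : x ∈ I) :
    DifferentiableAt ℝ F x :=
  (hF.differentiableOn (by simp)).differentiableAt (hI.mem_nhds hx)

lemma hasDerivAt_comp4 {E : Type*} [NormedAddCommGroup E] [NormedSpace ℝ E]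
    {I J : Set ℝ} (hI : IsOpen I) (hJ : IsOpen J) {F : ℝ → E} {u : ℝ → ℝ}
    (hF : ContDiffOn ℝ (⊤ : ℕ∞) F I) (hu : ContDiffOn ℝ (⊤ : ℕ∞) u J) {t : ℝ} (ht : t ∈ J) (hut : u t ∈ I) :
    HasDerivAt (F ∘ u) (deriv u t • deriv F (u t)) t :=
  HasDerivAt.scomp (𝕜 := ℝ) (𝕜' := ℝ) t (diffAt_of_contDiffOn hI hF hut).hasDerivAt
    (diffAt_of_contDiffOn hJ hu ht).hasDerivAt

lemma diff_pdot_mu {I : Set ℝ} (hI : IsOpen I) {γ f₁ f₂ X : ℝ → Fin 4 → ℝ}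
    (hγ : ContDiffOn ℝ (⊤ : ℕ∞) γ I) (h1 : ContDiffOn ℝ (⊤ : ℕ∞) f₁ I) (h2 : ContDiffOn ℝ (⊤ : ℕ∞) f₂ I)
    (hX : ContDiffOn ℝ (⊤ : ℕ∞) X I) {x : ℝ} (hx : x ∈ I) :
    DifferentiableAt ℝ (fun s => pdot (deriv X s) (muOf γ f₁ f₂ s)) x := by
  have hγ' := diffAt_of_contDiffOn hI hγ hx
  have h1' := diffAt_of_contDiffOn hI h1 hx
  have h2' := diffAt_of_contDiffOn hI h2 hx
  have hX' := diffAt_of_contDiffOn hI (hX.deriv_of_isOpen hI (by simp)) hx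
  simp only [pdot, muOf, tripleProd, det3, Matrix.cons_val_zero, Matrix.cons_val_one,
    Matrix.head_cons, Matrix.cons_val_two, Matrix.tail_cons, Matrix.cons_val_three]
  fun_prop

theorem timelike_evolute_independent_of_parametrization
    (I : Set ℝ) (hI : IsOpen I) (hIc : I.OrdConnected)
    (γ f₁ f₂ : ℝ → Fin 4 → ℝ)
    (hfr : TimelikeFramed I γ f₁ f₂)
    (α ℓh nh : ℝ → ℝ)
    (hA : ∀ s ∈ I, α s = tcurvA γ f₁ f₂ s)
    (hL : ∀ s ∈ I, ℓh s = tcurvL f₁ f₂ s)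
    (hM0 : ∀ s ∈ I, tcurvM γ f₁ f₂ s = 0)
    (hN : ∀ s ∈ I, nh s = tcurvN γ f₁ f₂ s)
    (himm : ∀ s ∈ I, ¬(α s = 0 ∧ ℓh s = 0 ∧ nh s = 0))
    (hnd : ∀ s ∈ I, (α s) ^ 2 ≠ (nh s) ^ 2)
    (hf : ∀ s ∈ I, tF α ℓh nh s ≠ 0)
    (J : Set ℝ) (hJ : IsOpen J) (hJc : J.OrdConnected)
    (u : ℝ → ℝ) (hu : ContDiffOn ℝ (⊤ : ℕ∞) u J)
    (humaps : Set.MapsTo u J I) (husurj : Set.SurjOn u J I)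
    (hu' : ∀ t ∈ J, 0 < deriv u t)
    (αu ℓu nu : ℝ → ℝ)
    (hαu : ∀ t ∈ J, αu t = tcurvA (γ ∘ u) (f₁ ∘ u) (f₂ ∘ u) t)
    (hℓu : ∀ t ∈ J, ℓu t = tcurvL (f₁ ∘ u) (f₂ ∘ u) t)
    (hnu : ∀ t ∈ J, nu t = tcurvN (γ ∘ u) (f₁ ∘ u) (f₂ ∘ u) t) :
    TimelikeFramed J (γ ∘ u) (f₁ ∘ u) (f₂ ∘ u) ∧
    (∀ t ∈ J, tcurvM (γ ∘ u) (f₁ ∘ u) (f₂ ∘ u) t = 0) ∧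
    (∀ t ∈ J, ¬(αu t = 0 ∧ ℓu t = 0 ∧ nu t = 0)) ∧
    (∀ t ∈ J, (αu t) ^ 2 ≠ (nu t) ^ 2) ∧
    (∀ t ∈ J, tF αu ℓu nu t ≠ 0) ∧
    (∀ t ∈ J, tEvolute (γ ∘ u) (f₁ ∘ u) (f₂ ∘ u) αu ℓu nu t
        = tEvolute γ f₁ f₂ α ℓh nh (u t)) := by
  -- chain rule for derivatives of composed frame maps
  have hder : ∀ (F : ℝ → Fin 4 → ℝ), ContDiffOn ℝ (⊤ : ℕ∞) F I → ∀ t ∈ J,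
      deriv (F ∘ u) t = deriv u t • deriv F (u t) := fun F hF t ht =>
    (hasDerivAt_comp4 hI hJ hF hu ht (humaps ht)).deriv
  have hmu : ∀ t : ℝ, muOf (γ ∘ u) (f₁ ∘ u) (f₂ ∘ u) t = muOf γ f₁ f₂ (u t) := fun t => rfl
  -- curvature transformation
  have hαu' : ∀ t ∈ J, αu t = deriv u t * α (u t) := by
    intro t ht
    rw [hαu t ht, tcurvA, hmu, hder γ hfr.smooth_γ t ht, pdot_smul_left,
      hA (u t) (humaps ht), tcurvA]
    ring
  have hℓu' : ∀ t ∈ J, ℓu t = deriv u t * ℓh (u t) := by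
    intro t ht
    rw [hℓu t ht, tcurvL, hder f₁ hfr.smooth_v₁ t ht, pdot_smul_left,
      hL (u t) (humaps ht), tcurvL]
    rfl
  have hnu' : ∀ t ∈ J, nu t = deriv u t * nh (u t) := by
    intro t ht
    rw [hnu t ht, tcurvN, hmu, hder f₂ hfr.smooth_v₂ t ht, pdot_smul_left,
      hN (u t) (humaps ht), tcurvN]
    ring
  have hune : ∀ t ∈ J, deriv u t ≠ 0 := fun t ht => ne_of_gt (hu' t ht)
  -- differentiability of the curvature functions on I
  have hdiffA : ∀ x ∈ I, DifferentiableAt ℝ α x := by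
    intro x hx
    have h1 : DifferentiableAt ℝ (fun s => -pdot (deriv γ s) (muOf γ f₁ f₂ s)) x :=
      (diff_pdot_mu hI hfr.smooth_γ hfr.smooth_v₁ hfr.smooth_v₂ hfr.smooth_γ hx).neg
    have hev : α =ᶠ[nhds x] (fun s => -pdot (deriv γ s) (muOf γ f₁ f₂ s)) :=
      Filter.eventuallyEq_of_mem (hI.mem_nhds hx) (fun r hr => hA r hr)
    exact h1.congr_of_eventuallyEq hev
  have hdiffN : ∀ x ∈ I, DifferentiableAt ℝ nh x := by
    intro x hx
    have h1 : DifferentiableAt ℝ (fun s => -pdot (deriv f₂ s) (muOf γ f₁ f₂ s)) x :=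
      (diff_pdot_mu hI hfr.smooth_γ hfr.smooth_v₁ hfr.smooth_v₂ hfr.smooth_v₂ hx).neg
    have hev : nh =ᶠ[nhds x] (fun s => -pdot (deriv f₂ s) (muOf γ f₁ f₂ s)) :=
      Filter.eventuallyEq_of_mem (hI.mem_nhds hx) (fun r hr => hN r hr)
    exact h1.congr_of_eventuallyEq hev
  -- derivatives of the reparametrized curvatures
  have hderscal : ∀ (g : ℝ → ℝ) (gu : ℝ → ℝ), (∀ x ∈ I, DifferentiableAt ℝ g x) →
      (∀ t ∈ J, gu t = deriv u t * g (u t)) → ∀ t ∈ J,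
      deriv gu t = deriv (deriv u) t * g (u t) + deriv u t * (deriv g (u t) * deriv u t) := by
    intro g gu hg hgu t ht
    have hev : gu =ᶠ[nhds t] fun r => deriv u r * g (u r) :=
      Filter.eventuallyEq_of_mem (hJ.mem_nhds ht) (fun r hr => hgu r hr)
    rw [hev.deriv_eq]
    have hdu : HasDerivAt u (deriv u t) t := (diffAt_of_contDiffOn hJ hu ht).hasDerivAt
    have hddu : HasDerivAt (deriv u) (deriv (deriv u) t) t :=
      (diffAt_of_contDiffOn hJ (hu.deriv_of_isOpen hJ (by simp)) ht).hasDerivAt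
    have hg' : HasDerivAt g (deriv g (u t)) (u t) := (hg (u t) (humaps ht)).hasDerivAt
    have hcomp : HasDerivAt (fun r => g (u r)) (deriv g (u t) * deriv u t) t := hg'.comp t hdu
    exact (hddu.mul hcomp).deriv
  have hderA := hderscal α αu hdiffA hαu'
  have hderN := hderscal nh nu hdiffN hnu'
  have htF : ∀ t ∈ J, tF αu ℓu nu t = (deriv u t) ^ 6 * tF α ℓh nh (u t) := by
    intro t ht
    simp only [tF]
    rw [hαu' t ht, hℓu' t ht, hnu' t ht, hderA t ht, hderN t ht]
    ring
  refine ⟨?_, ?_, ?_, ?_, ?_, ?_⟩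
  · exact {
      smooth_γ := hfr.smooth_γ.comp hu humaps
      smooth_v₁ := hfr.smooth_v₁.comp hu humaps
      smooth_v₂ := hfr.smooth_v₂.comp hu humaps
      ads := fun t ht => hfr.ads (u t) (humaps ht)
      normv₁ := fun t ht => hfr.normv₁ (u t) (humaps ht)
      normv₂ := fun t ht => hfr.normv₂ (u t) (humaps ht)
      orth₁ := fun t ht => hfr.orth₁ (u t) (humaps ht)
      orth₂ := fun t ht => hfr.orth₂ (u t) (humaps ht)
      orth₃ := fun t ht => hfr.orth₃ (u t) (humaps ht)
      tangent₁ := fun t ht => by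
        rw [hder γ hfr.smooth_γ t ht, pdot_smul_left]
        have : pdot (deriv γ (u t)) (f₁ (u t)) = 0 := hfr.tangent₁ (u t) (humaps ht)
        simp [Function.comp, this]
      tangent₂ := fun t ht => by
        rw [hder γ hfr.smooth_γ t ht, pdot_smul_left]
        have : pdot (deriv γ (u t)) (f₂ (u t)) = 0 := hfr.tangent₂ (u t) (humaps ht)
        simp [Function.comp, this] }
  · intro t ht
    rw [tcurvM, hmu, hder f₁ hfr.smooth_v₁ t ht, pdot_smul_left]
    have : tcurvM γ f₁ f₂ (u t) = 0 := hM0 (u t) (humaps ht)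
    rw [tcurvM] at this
    rw [show -(deriv u t * pdot (deriv f₁ (u t)) (muOf γ f₁ f₂ (u t)))
        = deriv u t * -(pdot (deriv f₁ (u t)) (muOf γ f₁ f₂ (u t))) by ring, this, mul_zero]
  · intro t ht h
    obtain ⟨h1, h2, h3⟩ := h
    rw [hαu' t ht] at h1; rw [hℓu' t ht] at h2; rw [hnu' t ht] at h3
    have hne := hune t ht
    exact himm (u t) (humaps ht)
      ⟨(mul_eq_zero.mp h1).resolve_left hne, (mul_eq_zero.mp h2).resolve_left hne, (mul_eq_zero.mp h3).resolve_left hne⟩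
  · intro t ht h
    rw [hαu' t ht, hnu' t ht, mul_pow, mul_pow] at h
    exact hnd (u t) (humaps ht) (mul_left_cancel₀ (pow_ne_zero 2 (hune t ht)) h)
  · intro t ht
    rw [htF t ht]
    exact mul_ne_zero (pow_ne_zero _ (hune t ht)) (hf _ (humaps ht))
  · intro t ht
    have hs : Real.sqrt |tF αu ℓu nu t| = (deriv u t) ^ 3 * Real.sqrt |tF α ℓh nh (u t)| := by
      rw [htF t ht, abs_mul, abs_pow, abs_of_pos (hu' t ht),
        show (deriv u t) ^ 6 = ((deriv u t) ^ 3) ^ 2 by ring,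
        Real.sqrt_mul (sq_nonneg _), Real.sqrt_sq (pow_pos (hu' t ht) 3).le]
    have hS : Real.sqrt |tF α ℓh nh (u t)| ≠ 0 :=
      (Real.sqrt_pos.mpr (abs_pos.mpr (hf _ (humaps ht)))).ne'
    have hc := hune t ht
    funext i
    simp only [tEvolute, Pi.smul_apply, Pi.sub_apply, Function.comp_apply, smul_eq_mul]
    rw [hs, hαu' t ht, hℓu' t ht, hnu' t ht, hderA t ht, hderN t ht]
    field_simp
    ring
end
end
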